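/- For n = 8, the 240 normalized E8 minimal vectors A ⊆ S^7 satisfy: for every x ∈ S^7 there exists a ∈ A with ⟨x, a⟩ ≥ cos(π/4) = 1/√2; equivalently, max over the 240 unit vectors a of ⟨x,a⟩ is at least 1/√2 for every unit vector x ∈ E^8. -/

import Mathlib

open RealInnerProductSpace

/-- The caps of angular radius `r` centered at points of `A` cover the unit sphere. -/
def Covers {n : ℕ} (A : Set (EuclideanSpace ℝ (Fin n))) (r : ℝ) : Prop :=
  ∀ x ∈ Metric.sphere (0 : EuclideanSpace ℝ (Fin n)) 1, ∃ a ∈ A, Real.arccos ⟪x, a⟫ ≤ r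

/-- The covering radius of `A`. -/
noncomputable def covRadius {n : ℕ} (A : Set (EuclideanSpace ℝ (Fin n))) : ℝ :=
  sInf {r : ℝ | 0 < r ∧ Covers A r}

/-- The 240 minimal (root) vectors of the `E₈` lattice: vectors with two coordinates
`±2` and the rest `0`, together with vectors with all coordinates `±1` and an even
number of minus signs. -/
def E8roots : Set (EuclideanSpace ℝ (Fin 8)) :=
  {v | (∃ i j : Fin 8, i ≠ j ∧ (v i = 2 ∨ v i = -2) ∧ (v j = 2 ∨ v j = -2) ∧
          ∀ k, k ≠ i → k ≠ j → v k = 0) ∨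
        ((∀ i, v i = 1 ∨ v i = -1) ∧ Even ({i : Fin 8 | v i = -1}.ncard))}

/-- The normalized `E₈` root system, as a subset of the unit sphere `S⁷`. -/
noncomputable def E8A : Set (EuclideanSpace ℝ (Fin 8)) :=
  (fun v => (Real.sqrt 8)⁻¹ • v) '' E8roots

/-!
Write `y k = |x k|`, with largest entries `a ≥ b` and smallest entry `c`. The root with `±2` in
the two largest coordinates, signed like `x`, has inner product `2 (a + b)` with `x`; the root
`(±1, …, ±1)` signed like `x` except possibly at the smallest coordinate (flipped to fix the parity
of minus signs) has inner product at least `∑ y - 2 c`. One of the two is at least `2 = √8 / √2`: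
if `a + b < 1`, the six middle coordinates lie in `[c, b]`, so `y k ^ 2 ≤ (b + c) y k - b c`, and
together with `∑ y ^ 2 = 1` a polynomial inequality in `a, b, c` forces `∑ y - 2 c ≥ 2`.
-/

open Finset

lemma Finset.sum_sq_le_of_forall_mem_Icc {ι : Type*} (s : Finset ι) {y : ι → ℝ} {b c : ℝ}
    (h : ∀ k ∈ s, y k ∈ Set.Icc c b) :
    ∑ k ∈ s, y k ^ 2 ≤ (b + c) * ∑ k ∈ s, y k - s.card * (b * c) := by
  calc ∑ k ∈ s, y k ^ 2 ≤ ∑ k ∈ s, ((b + c) * y k - b * c) :=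
        sum_le_sum fun k hk => by
          nlinarith [mul_nonneg (sub_nonneg.2 (h k hk).1) (sub_nonneg.2 (h k hk).2)]
    _ = (b + c) * ∑ k ∈ s, y k - s.card * (b * c) := by
        rw [sum_sub_distrib, mul_sum, sum_const, nsmul_eq_mul]

lemma e8_polynomial_bound {a b c : ℝ} (hc : 0 ≤ c) (hcb : c ≤ b) (hba : b ≤ a) (hab : a + b < 1) :
    (b + c) * (2 + 2 * c - a - b) < 1 - a ^ 2 - b ^ 2 + 6 * (b * c) := by
  have hab' := sub_nonneg.2 hab.le
  nlinarith [mul_pos (sub_pos.2 hab) (sub_pos.2 hab), mul_nonneg hab' (sub_nonneg.2 hba),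
    mul_nonneg hab' (sub_nonneg.2 hcb), mul_nonneg hab' hc, mul_nonneg (mul_nonneg hab' hc) hc,
    mul_nonneg hc (sub_nonneg.2 hcb), mul_nonneg hc (sub_nonneg.2 hba)]

lemma two_le_sum_sub_two_mul_min {y : Fin 8 → ℝ} (hy : ∀ k, 0 ≤ y k) (hsq : ∑ k, y k ^ 2 = 1)
    {i j m : Fin 8} (hij : i ≠ j) (hi : ∀ k, y k ≤ y i) (hj : ∀ k ≠ i, y k ≤ y j)
    (hm : ∀ k, y m ≤ y k) (hlt : y i + y j < 1) :
    2 ≤ ∑ k, y k - 2 * y m := by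
  set T := univ \ {i, j}
  have hT : T.card = 6 := by rw [card_sdiff_of_subset (subset_univ _), card_pair hij]; rfl
  have hsplit (f : Fin 8 → ℝ) : ∑ k, f k = f i + f j + ∑ k ∈ T, f k := by
    rw [← sum_sdiff (subset_univ {i, j}), sum_pair hij]; ring
  have hbound := T.sum_sq_le_of_forall_mem_Icc (b := y j) (c := y m) fun k hk =>
    ⟨hm k, hj k (by simp only [T, mem_sdiff, mem_insert, mem_singleton] at hk; tauto)⟩
  rw [hsplit] at hsq ⊢
  rw [hT, Nat.cast_ofNat] at hbound
  by_contra! hrest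
  have hpoly := e8_polynomial_bound (hy m) (hm j) (hi j) hlt
  have hbc : 0 ≤ y j + y m := add_nonneg (hy j) (hy m)
  linarith [mul_le_mul_of_nonneg_left
    (show ∑ k ∈ T, y k ≤ 2 + 2 * y m - y i - y j by linarith) hbc]

lemma exists_one_le_add_or_exists_two_le_sum_sub {y : Fin 8 → ℝ} (hy : ∀ k, 0 ≤ y k)
    (hsq : ∑ k, y k ^ 2 = 1) :
    (∃ i j, i ≠ j ∧ 1 ≤ y i + y j) ∨ ∃ m, 2 ≤ ∑ k, y k - 2 * y m := by
  obtain ⟨i, -, hi⟩ := exists_max_image univ y univ_nonempty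
  obtain ⟨j, hj_mem, hj⟩ := exists_max_image (univ.erase i) y univ_nontrivial.erase_nonempty
  obtain ⟨m, -, hm⟩ := exists_min_image univ y univ_nonempty
  have hij : i ≠ j := (ne_of_mem_erase hj_mem).symm
  by_cases h : 1 ≤ y i + y j
  · exact .inl ⟨i, j, hij, h⟩
  · exact .inr ⟨m, two_le_sum_sub_two_mul_min hy hsq hij (fun k => hi k (mem_univ k))
      (fun k hk => hj k (mem_erase.2 ⟨hk, mem_univ k⟩)) (fun k => hm k (mem_univ k)) (not_le.1 h)⟩

lemma exists_sign_mul_eq_abs (t : ℝ) : ∃ s : ℝ, (s = 1 ∨ s = -1) ∧ t * s = |t| := by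
  rcases abs_choice t with h | h
  · exact ⟨1, .inl rfl, by rw [h, mul_one]⟩
  · exact ⟨-1, .inr rfl, by rw [h, mul_neg_one]⟩

lemma single_add_single_mem_E8roots {i j : Fin 8} (hij : i ≠ j) {s t : ℝ}
    (hs : s = 1 ∨ s = -1) (ht : t = 1 ∨ t = -1) :
    EuclideanSpace.single i (2 * s) + EuclideanSpace.single j (2 * t) ∈ E8roots := by
  refine Or.inl ⟨i, j, hij, ?_, ?_, fun k hki hkj => ?_⟩
  · rcases hs with rfl | rfl <;> simp [hij.symm]
  · rcases ht with rfl | rfl <;> simp [hij]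
  · simp [hki, hkj]

lemma exists_mem_E8roots_inner_eq (x : EuclideanSpace ℝ (Fin 8)) {i j : Fin 8} (hij : i ≠ j) :
    ∃ r ∈ E8roots, ⟪x, r⟫ = 2 * (|x i| + |x j|) := by
  obtain ⟨s, hs, hxs⟩ := exists_sign_mul_eq_abs (x i)
  obtain ⟨t, ht, hxt⟩ := exists_sign_mul_eq_abs (x j)
  refine ⟨_, single_add_single_mem_E8roots hij hs ht, ?_⟩
  rw [inner_add_right, EuclideanSpace.inner_single_right, EuclideanSpace.inner_single_right]
  simp only [conj_trivial]
  linear_combination 2 * hxs + 2 * hxt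

lemma prod_eq_neg_one_pow_ncard {ι R : Type*} [Fintype ι] [CommRing R] {w : ι → R}
    (hw : ∀ i, w i = 1 ∨ w i = -1) : ∏ i, w i = (-1) ^ {i | w i = -1}.ncard := by
  classical
  rw [← prod_filter_mul_prod_filter_not univ (fun i => w i = -1),
    prod_congr rfl fun i hi => (mem_filter.1 hi).2, prod_const,
    prod_eq_one fun i hi => (hw i).resolve_right (mem_filter.1 hi).2, mul_one,
    ← Set.ncard_coe_finset]
  simp

lemma mem_E8roots_of_prod_eq_one {w : EuclideanSpace ℝ (Fin 8)} (hw : ∀ i, w i = 1 ∨ w i = -1)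
    (hprod : ∏ i, w i = 1) : w ∈ E8roots :=
  Or.inr ⟨hw, (neg_one_pow_eq_one_iff_even (by norm_num : (-1 : ℝ) ≠ 1)).1
    (by rw [← prod_eq_neg_one_pow_ncard hw, hprod])⟩

lemma exists_mem_E8roots_sum_abs_sub_le_inner (x : EuclideanSpace ℝ (Fin 8)) (m : Fin 8) :
    ∃ r ∈ E8roots, ∑ k, |x k| - 2 * |x m| ≤ ⟪x, r⟫ := by
  choose σ hσ hxσ using fun k => exists_sign_mul_eq_abs (x k)
  -- the sign at `m` is the product of the others, so that `∏ w = 1`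
  set p := ∏ k ∈ univ.erase m, σ k
  have hp : p * p = 1 := by
    rw [← prod_mul_distrib]
    exact prod_eq_one fun k _ => by rcases hσ k with h | h <;> simp [h]
  set w := Function.update σ m p
  have hw : ∀ k, w k = 1 ∨ w k = -1 := by
    intro k
    rcases eq_or_ne k m with rfl | hk
    · simpa [w] using mul_self_eq_one_iff.1 hp
    · simpa [w, hk] using hσ k
  refine ⟨WithLp.toLp 2 w, mem_E8roots_of_prod_eq_one hw ?_, ?_⟩
  · rw [← mul_prod_erase univ _ (mem_univ m), prod_congr rfl fun k hk =>
      Function.update_of_ne (ne_of_mem_erase hk) p σ]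
    simpa [w] using hp
  · have hxm : -|x m| ≤ x m * w m := by
      rcases hw m with h | h <;> simp [h, neg_abs_le, le_abs_self]
    have hrest : ∀ k ∈ univ.erase m, x k * w k = |x k| := fun k hk => by
      simpa [w, ne_of_mem_erase hk] using hxσ k
    have hinner : ⟪x, WithLp.toLp 2 w⟫ = ∑ k, x k * w k := by
      simp [PiLp.inner_apply, mul_comm]
    rw [hinner, ← add_sum_erase univ _ (mem_univ m), ← add_sum_erase univ _ (mem_univ m),
      sum_congr rfl hrest]
    linarith

lemma exists_mem_E8roots_two_le_inner {x : EuclideanSpace ℝ (Fin 8)} (hx : ‖x‖ = 1) :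
    ∃ r ∈ E8roots, 2 ≤ ⟪x, r⟫ := by
  have hsq : ∑ k, |x k| ^ 2 = 1 := by
    simpa [sq_abs, hx] using (EuclideanSpace.real_norm_sq_eq x).symm
  rcases exists_one_le_add_or_exists_two_le_sum_sub (fun k => abs_nonneg (x k)) hsq with
    ⟨i, j, hij, h⟩ | ⟨m, h⟩
  · obtain ⟨r, hr, hxr⟩ := exists_mem_E8roots_inner_eq x hij
    exact ⟨r, hr, by linarith⟩
  · obtain ⟨r, hr, hxr⟩ := exists_mem_E8roots_sum_abs_sub_le_inner x m
    exact ⟨r, hr, by linarith⟩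

theorem e8_caps_cover :
    ∀ x ∈ Metric.sphere (0 : EuclideanSpace ℝ (Fin 8)) 1,
      ∃ a ∈ E8A, (1 / Real.sqrt 2 : ℝ) ≤ ⟪x, a⟫ := by
  intro x hx
  obtain ⟨r, hr, hxr⟩ := exists_mem_E8roots_two_le_inner (mem_sphere_zero_iff_norm.1 hx)
  refine ⟨(√8)⁻¹ • r, ⟨r, hr, rfl⟩, ?_⟩
  have h8 : √8 = 2 * √2 := by
    rw [show (8 : ℝ) = 2 ^ 2 * 2 by norm_num, Real.sqrt_mul (by norm_num), Real.sqrt_sq zero_le_two]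
  calc 1 / √2 = (2 * √2)⁻¹ * 2 := by field_simp
    _ ≤ (√8)⁻¹ * ⟪x, r⟫ := h8 ▸ mul_le_mul_of_nonneg_left hxr (by positivity)
    _ = ⟪x, (√8)⁻¹ • r⟫ := (real_inner_smul_right _ _ _).symm
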